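/- Let R be a δ-ring which is (p, x)-adically complete, and suppose xy = p^k for some x, y ∈ R and k ≥ 1. Then the elements y, δ(y), …, δ^{k-1}(y) generate the unit ideal of R (i.e., y is weakly (k-1)-distinguished). -/

import Mathlib

/-!
Let `I_j` be the ideal generated by `y, δ y, …, δ^{j-1} y` and `φ a = a ^ p + p δ a` the
Frobenius lift. Since `δ (c g) = φ c · δ g + g ^ p · δ c` and `δ` maps `I_j` into `I_{j+1}`,
induction on `j` gives `δ^j (x y) ≡ φ^j x · δ^j y (mod I_j)`. On integers `δ` is forced
to be `n ↦ (n - n ^ p) / p`, and `δ^k (p ^ k) ≡ 1 (mod p)`. So for `j = k` the ideal `I_k`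
contains an element `≡ 1 (mod (p, x))`; as `(p, x)` lies in the Jacobson radical of the
complete ring `R`, that element is a unit.
-/

/-- A δ-ring structure at the prime `p` on a commutative ring `R`. -/
structure DeltaRing (p : ℕ) (R : Type*) [CommRing R] where
  δ : R → R
  delta_one : δ 1 = 0
  delta_mul : ∀ a b, δ (a * b) = a ^ p * δ b + b ^ p * δ a + (p : R) * δ a * δ b
  delta_add : ∀ a b, δ (a + b) = δ a + δ b -
    ∑ i ∈ Finset.Ioo 0 p, ((p.choose i / p : ℕ) : R) * a ^ i * b ^ (p - i)

def intDelta (p : ℕ) (n : ℤ) : ℤ := (n - n ^ p) / p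

section intDelta

variable {p : ℕ} [hp : Fact p.Prime]

theorem prime_mul_intDelta (n : ℤ) : (p : ℤ) * intDelta p n = n - n ^ p := by
  refine Int.mul_ediv_cancel' ((ZMod.intCast_zmod_eq_zero_iff_dvd _ _).mp ?_)
  push_cast [ZMod.pow_card]
  ring

theorem intDelta_add (a b : ℤ) :
    intDelta p (a + b) = intDelta p a + intDelta p b -
      ∑ i ∈ Finset.Ioo 0 p, ((p.choose i / p : ℕ) : ℤ) * a ^ i * b ^ (p - i) := by
  apply mul_left_cancel₀ (Int.natCast_ne_zero.mpr hp.out.ne_zero)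
  have hsum : ∑ i ∈ Finset.Ioo 0 p, ((p.choose i / p : ℕ) : ℤ) * a ^ i * b ^ (p - i) =
      ∑ i ∈ Finset.Ioo 0 p, a ^ i * b ^ (p - i) * ((p.choose i / p : ℕ) : ℤ) :=
    Finset.sum_congr rfl fun _ _ => by ring
  rw [mul_sub, mul_add, prime_mul_intDelta, prime_mul_intDelta, prime_mul_intDelta,
    add_pow_prime_eq' hp.out, hsum]
  ring

theorem intDelta_prime_pow_succ_mul (k : ℕ) (u : ℤ) :
    intDelta p (p ^ (k + 1) * u) = p ^ k * (u - p ^ ((k + 1) * (p - 1)) * u ^ p) := by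
  apply mul_left_cancel₀ (Int.natCast_ne_zero.mpr hp.out.ne_zero)
  have hexp : (k + 1) * p = (k + 1) + (k + 1) * (p - 1) := by
    rw [← mul_one_add, Nat.add_sub_cancel' hp.out.one_le]
  rw [prime_mul_intDelta, mul_pow, ← pow_mul, hexp, pow_add]
  ring

theorem iterate_intDelta_prime_pow_mul_modEq (k : ℕ) (u : ℤ) :
    (intDelta p)^[k] (p ^ k * u) ≡ u [ZMOD p] := by
  induction k generalizing u with
  | zero => simp
  | succ k ih =>
    rw [Function.iterate_succ_apply, intDelta_prime_pow_succ_mul]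
    refine (ih _).trans (Int.modEq_iff_dvd.mpr ?_)
    have hexp : (k + 1) * (p - 1) ≠ 0 :=
      Nat.mul_ne_zero k.succ_ne_zero (Nat.sub_ne_zero_of_lt hp.out.one_lt)
    rw [sub_sub_cancel]
    exact dvd_mul_of_dvd_left (dvd_pow_self _ hexp) _

end intDelta

namespace DeltaRing

variable {p : ℕ} {R : Type*} [CommRing R] (dr : DeltaRing p R)

def phi (a : R) : R := a ^ p + p * dr.δ a

def iterateSpan (y : R) (j : ℕ) : Ideal R := Ideal.span ((fun i => dr.δ^[i] y) '' Set.Iio j)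

theorem delta_zero : dr.δ 0 = 0 := by
  have h := dr.delta_add 0 0
  rw [Finset.sum_eq_zero fun i hi => by rw [zero_pow (Finset.mem_Ioo.mp hi).1.ne', mul_zero,
    zero_mul], add_zero, sub_zero] at h
  exact left_eq_add.mp h

theorem delta_mul_eq_phi (a b : R) : dr.δ (a * b) = dr.phi a * dr.δ b + b ^ p * dr.δ a := by
  rw [dr.delta_mul, phi]
  ring

theorem delta_add_sub_mem {I : Ideal R} (a : R) {i : R} (hi : i ∈ I) :
    dr.δ (a + i) - dr.δ a - dr.δ i ∈ I := by
  rw [dr.delta_add, show ∀ u v w : R, u + v - w - u - v = -w from fun _ _ _ => by ring]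
  refine I.neg_mem (I.sum_mem fun j hj => I.mul_mem_left _ (I.pow_mem_of_mem hi _ ?_))
  have := Finset.mem_Ioo.mp hj
  omega

theorem delta_mem_span_union_image [Fact p.Prime] {S : Set R} {c : R}
    (hc : c ∈ Ideal.span S) : dr.δ c ∈ Ideal.span (S ∪ dr.δ '' S) := by
  set I := Ideal.span (S ∪ dr.δ '' S)
  have hSI : Ideal.span S ≤ I := Ideal.span_mono Set.subset_union_left
  induction hc using Submodule.span_induction with
  | mem s hs => exact Ideal.subset_span (Or.inr ⟨s, hs, rfl⟩)
  | zero => simp [delta_zero]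
  | add a b _ hb iha ihb =>
    simpa using I.add_mem (dr.delta_add_sub_mem a (hSI hb)) (I.add_mem iha ihb)
  | smul r a ha iha =>
    rw [smul_eq_mul, delta_mul_eq_phi]
    exact I.add_mem (I.mul_mem_left _ iha)
      (I.mul_mem_right _ (I.pow_mem_of_mem (hSI ha) p (Fact.out : p.Prime).pos))

theorem iterate_mem_iterateSpan (y : R) {i j : ℕ} (h : i < j) :
    dr.δ^[i] y ∈ dr.iterateSpan y j :=
  Ideal.subset_span ⟨i, h, rfl⟩

theorem iterateSpan_mono (y : R) : Monotone (dr.iterateSpan y) := fun _ _ h =>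
  Ideal.span_mono (Set.image_mono (Set.Iio_subset_Iio h))

theorem delta_mem_iterateSpan_succ [Fact p.Prime] (y : R) {j : ℕ} {c : R}
    (hc : c ∈ dr.iterateSpan y j) : dr.δ c ∈ dr.iterateSpan y (j + 1) := by
  refine Ideal.span_le.mpr ?_ (dr.delta_mem_span_union_image hc)
  rintro _ (⟨i, hi, rfl⟩ | ⟨_, ⟨i, hi, rfl⟩, rfl⟩)
  · exact dr.iterate_mem_iterateSpan y (Nat.lt_succ_of_lt hi)
  · rw [← Function.iterate_succ_apply' dr.δ]
    exact dr.iterate_mem_iterateSpan y (Nat.succ_lt_succ hi)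

theorem iterate_delta_mul_sub_mem_iterateSpan [Fact p.Prime] (x y : R) (j : ℕ) :
    dr.δ^[j] (x * y) - dr.phi^[j] x * dr.δ^[j] y ∈ dr.iterateSpan y j := by
  induction j with
  | zero => simp
  | succ j ih =>
    set c := dr.phi^[j] x
    set g := dr.δ^[j] y
    set i := dr.δ^[j] (x * y) - c * g
    have hsplit : dr.δ^[j + 1] (x * y) - dr.phi^[j + 1] x * dr.δ^[j + 1] y =
        (dr.δ (c * g + i) - dr.δ (c * g) - dr.δ i) + dr.δ i + g ^ p * dr.δ c := by
      rw [Function.iterate_succ_apply', Function.iterate_succ_apply',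
        Function.iterate_succ_apply', show dr.δ^[j] (x * y) = c * g + i by ring,
        delta_mul_eq_phi]
      ring
    have hg : g ∈ dr.iterateSpan y (j + 1) := dr.iterate_mem_iterateSpan y j.lt_succ_self
    rw [hsplit]
    refine Ideal.add_mem _ (Ideal.add_mem _ ?_ (dr.delta_mem_iterateSpan_succ y ih)) ?_
    · exact dr.delta_add_sub_mem _ (dr.iterateSpan_mono y j.le_succ ih)
    · exact Ideal.mul_mem_right _ _ (Ideal.pow_mem_of_mem _ hg p (Fact.out : p.Prime).pos)

theorem iterate_phi_mem_span [Fact p.Prime] (x : R) (j : ℕ) :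
    dr.phi^[j] x ∈ Ideal.span {(p : R), x} := by
  induction j with
  | zero => exact Ideal.subset_span (by simp)
  | succ j ih =>
    rw [Function.iterate_succ_apply']
    exact Ideal.add_mem _ (Ideal.pow_mem_of_mem _ ih p (Fact.out : p.Prime).pos)
      (Ideal.mul_mem_right _ _ (Ideal.subset_span (by simp)))

theorem delta_intCast [Fact p.Prime] (n : ℤ) : dr.δ n = intDelta p n := by
  suffices h : ∀ n : ℤ,
      dr.δ ((n + 1 : ℤ) : R) - intDelta p (n + 1) = dr.δ n - intDelta p n by
    have h0 : dr.δ ((0 : ℤ) : R) - intDelta p 0 = 0 := by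
      simp [delta_zero, intDelta, zero_pow (Fact.out : p.Prime).ne_zero]
    rw [← sub_eq_zero]
    induction n using Int.induction_on with
    | zero => exact h0
    | succ n ih => rwa [h]
    | pred n ih => rwa [← h, sub_add_cancel]
  intro n
  have h1 : intDelta p 1 = 0 := by simp [intDelta]
  rw [Int.cast_add, Int.cast_one, dr.delta_add, dr.delta_one, intDelta_add, h1]
  simp only [Int.cast_sub, Int.cast_add, Int.cast_zero, Int.cast_sum, Int.cast_mul, Int.cast_pow,
    Int.cast_natCast, one_pow, mul_one]
  ring

theorem iterate_delta_intCast [Fact p.Prime] (j : ℕ) (n : ℤ) :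
    dr.δ^[j] n = ((intDelta p)^[j] n : ℤ) := by
  induction j generalizing n with
  | zero => rfl
  | succ j ih => rw [Function.iterate_succ_apply, Function.iterate_succ_apply, delta_intCast, ih]

theorem iterate_delta_prime_pow_sub_one_mem [Fact p.Prime] (k : ℕ) :
    dr.δ^[k] ((p : R) ^ k) - 1 ∈ Ideal.span {(p : R)} := by
  have hmod := iterate_intDelta_prime_pow_mul_modEq (p := p) k 1
  rw [mul_one] at hmod
  rw [show (p : R) ^ k = (((p : ℤ) ^ k : ℤ) : R) by push_cast; rfl, iterate_delta_intCast,
    Ideal.mem_span_singleton]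
  obtain ⟨t, ht⟩ := hmod.symm.dvd
  refine ⟨t, ?_⟩
  rw [← Int.cast_one, ← Int.cast_sub, ht, Int.cast_mul, Int.cast_natCast]

end DeltaRing

theorem stmt5_general {p : ℕ} [Fact p.Prime] {R : Type*} [CommRing R] (dr : DeltaRing p R)
    (x y : R) (k : ℕ) (hxy : x * y = (p : R) ^ k)
    (hc : IsAdicComplete (Ideal.span {(p : R), x}) R) :
    Ideal.span ((fun j => dr.δ^[j] y) '' Set.Iio k) = ⊤ := by
  set e := dr.δ^[k] (x * y) - dr.phi^[k] x * dr.δ^[k] y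
  have he : e ∈ dr.iterateSpan y k := dr.iterate_delta_mul_sub_mem_iterateSpan x y k
  have he1 : e - 1 ∈ Ideal.span {(p : R), x} := by
    have hδ := Ideal.span_mono (Set.singleton_subset_iff.mpr (Set.mem_insert _ {x}))
      (dr.iterate_delta_prime_pow_sub_one_mem k)
    have hφ := Ideal.mul_mem_right (dr.δ^[k] y) _ (dr.iterate_phi_mem_span x k)
    convert sub_mem hδ hφ using 1
    rw [← hxy]
    ring
  exact Ideal.eq_top_of_isUnit_mem _ he
    (Ideal.isUnit_of_sub_one_mem_jacobson_bot e (IsAdicComplete.le_jacobson_bot _ he1))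

/-- If `R` is a `(p,x)`-adically complete δ-ring and `x * y = p^k` with `k ≥ 1`,
then `y, δ(y), …, δ^{k-1}(y)` generate the unit ideal (`y` is weakly
`(k-1)`-distinguished). -/
theorem stmt5 {p : ℕ} [Fact p.Prime] {R : Type*} [CommRing R] (dr : DeltaRing p R)
    (x y : R) (k : ℕ) (hk : 1 ≤ k) (hxy : x * y = (p : R) ^ k)
    (hc : IsAdicComplete (Ideal.span {(p : R), x}) R) :
    Ideal.span ((fun j => dr.δ^[j] y) '' Set.Iio k) = ⊤ :=
  stmt5_general dr x y k hxy hc
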